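/- arXiv:0812.4230 — 2 statements merged into one kernel-verified Lean document; each statement's English description precedes it below -/
import Mathlib

section
/- For every r with 0 ≤ r ≤ 2l and every symplectic-spinor-valued r-form φ, one has Hφ = 𝕚(r − l)φ; that is, the operator H = XY + YX acts on spinor-valued r-forms as 𝕚(r − l) times the identity. -/
noncomputable section

open Finset MvPolynomial

/-- The space of symplectic spinors: complex polynomials in `l` variables. -/
abbrev Pol (l : ℕ) := MvPolynomial (Fin l) ℂ

/-- Components `ω_{ij}` of the standard symplectic form on `ℝ^{2l}`. -/
def om (l : ℕ) (i j : Fin (2*l)) : ℝ :=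
  if (j : ℕ) = (i : ℕ) + l then 1 else if (i : ℕ) = (j : ℕ) + l then -1 else 0

/-- Components `ω^{ij}`, defined by `Σ_k ω_{ik} ω^{jk} = δ_i^j`. -/
def omUp (l : ℕ) (i j : Fin (2*l)) : ℝ :=
  if (j : ℕ) = (i : ℕ) + l then 1 else if (i : ℕ) = (j : ℕ) + l then -1 else 0

/-- Symplectic Clifford multiplication by a basis vector `e_i`. -/
def cliff (l : ℕ) (i : Fin (2*l)) (f : Pol l) : Pol l :=
  if h : (i : ℕ) < l then Complex.I • (MvPolynomial.X (⟨(i : ℕ), h⟩ : Fin l) * f)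
  else MvPolynomial.pderiv (⟨(i : ℕ) - l, by have := i.isLt; omega⟩ : Fin l) f

/-- Symplectic Clifford multiplication by an arbitrary vector, extended ℝ-bilinearly. -/
def cliffV (l : ℕ) (v : Fin (2*l) → ℝ) (f : Pol l) : Pol l :=
  ∑ i, ((v i : ℝ) : ℂ) • cliff l i f

/-- Symplectic-spinor-valued `r`-forms (as functions of their `r` vector arguments). -/
abbrev Form (l r : ℕ) := (Fin r → (Fin (2*l) → ℝ)) → Pol l

/-- The standard basis vector `e_i` of `ℝ^{2l}`. -/
def basisVec (l : ℕ) (i : Fin (2*l)) : Fin (2*l) → ℝ := Pi.single i 1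

/-- The operator `X`: `(Xφ)(v_1,…,v_{r+1}) = −Σ_a (−1)^{a+1} v_a · φ(v_1,…,v̂_a,…,v_{r+1})`. -/
def Xop (l r : ℕ) (φ : Form l r) : Form l (r+1) :=
  fun v => -∑ a : Fin (r+1), ((-1 : ℂ)^(a : ℕ)) • cliffV l (v a) (φ (fun b => v (a.succAbove b)))

/-- The operator `Y`: `(Yφ)(v_1,…,v_r) = Σ_{i,j} ω^{ij} e_j · φ(e_i, v_1,…,v_r)`. -/
def Yop (l r : ℕ) (φ : Form l (r+1)) : Form l r :=
  fun v => ∑ i, ∑ j, ((omUp l i j : ℝ) : ℂ) • cliff l j (φ (Fin.cons (basisVec l i) v))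

/-- The operator `H = XY + YX` (on 0-forms `Y` vanishes, so there `H = YX`). -/
def Hop (l : ℕ) : {r : ℕ} → Form l r → Form l r
  | 0, φ => Yop l 0 (Xop l 0 φ)
  | (r+1), φ => Xop l r (Yop l r φ) + Yop l (r+1) (Xop l (r+1) φ)

/-- `X²Y²` on spinor-valued 2-forms. -/
def XXYY (l : ℕ) (φ : Form l 2) : Form l 2 := Xop l 1 (Xop l 0 (Yop l 0 (Yop l 1 φ)))

/-- `XY` on spinor-valued 2-forms. -/
def XY2 (l : ℕ) (φ : Form l 2) : Form l 2 := Xop l 1 (Yop l 1 φ)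

/-- The projection `q^{20} = (1/l) X²Y²`. -/
def q20 (l : ℕ) (φ : Form l 2) : Form l 2 := ((l : ℂ))⁻¹ • XXYY l φ

/-- The projection `q^{21} = (𝕚/(1−l)) (XY − (𝕚/l) X²Y²)`. -/
def q21 (l : ℕ) (φ : Form l 2) : Form l 2 :=
  (Complex.I / (1 - (l : ℂ))) • (XY2 l φ - (Complex.I / (l : ℂ)) • XXYY l φ)

/-- The projection `q^{22} = Id − q^{20} − q^{21}`. -/
def q22 (l : ℕ) (φ : Form l 2) : Form l 2 := φ - q20 l φ - q21 l φ

/-- The spinor-valued 2-form `c · ε^k ∧ ε^m ⊗ s`. -/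
def w2 (l : ℕ) (c : ℝ) (k m : Fin (2*l)) (s : Pol l) : Form l 2 :=
  fun v => ((c * (v 0 k * v 1 m - v 0 m * v 1 k) : ℝ) : ℂ) • s

/-- The symplectic Ricci tensor `σ_{ij} = Σ_{k,m} ω^{km} R_{mjki}`. -/
def ric (l : ℕ) (R : Fin (2*l) → Fin (2*l) → Fin (2*l) → Fin (2*l) → ℝ)
    (i j : Fin (2*l)) : ℝ :=
  ∑ k, ∑ m, omUp l k m * R m j k i

/-- `σ̃_{ijkl}` built from a symmetric tensor `σ`. -/
def st (l : ℕ) (σ : Fin (2*l) → Fin (2*l) → ℝ) (i j k m : Fin (2*l)) : ℝ :=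
  (1/(2*((l : ℝ)+1))) * (om l i m * σ j k - om l i k * σ j m
    + om l j m * σ i k - om l j k * σ i m + 2 * σ i j * om l k m)

/-- The symplectic Weyl tensor `W = R − σ̃`. -/
def weyl (l : ℕ) (R : Fin (2*l) → Fin (2*l) → Fin (2*l) → Fin (2*l) → ℝ)
    (i j k m : Fin (2*l)) : ℝ :=
  R i j k m - st l (ric l R) i j k m

/-- Raising all four indices: `T^{ijkm} = Σ ω^{ia}ω^{jb}ω^{kc}ω^{md} T_{abcd}`. -/
def upT (l : ℕ) (T : Fin (2*l) → Fin (2*l) → Fin (2*l) → Fin (2*l) → ℝ)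
    (i j k m : Fin (2*l)) : ℝ :=
  ∑ a, ∑ b, ∑ c, ∑ d, omUp l i a * omUp l j b * omUp l k c * omUp l m d * T a b c d

/-- Raising both indices of a 2-tensor: `σ^{ij} = Σ ω^{ia}ω^{jb} σ_{ab}`. -/
def up2 (l : ℕ) (σ : Fin (2*l) → Fin (2*l) → ℝ) (i j : Fin (2*l)) : ℝ :=
  ∑ a, ∑ b, omUp l i a * omUp l j b * σ a b

/-- The spinor-valued 2-form `(𝕚/2) Σ T^{ij}_{kl} ε^k ∧ ε^l ⊗ e_{ij}·φ` built from a
4-tensor `T` (used for `R^S φ`, `σ^S φ` and `W^S φ`). -/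
def curvS (l : ℕ) (T : Fin (2*l) → Fin (2*l) → Fin (2*l) → Fin (2*l) → ℝ)
    (φ : Pol l) : Form l 2 :=
  (Complex.I/2) • ∑ i, ∑ j, ∑ k, ∑ m,
    w2 l (∑ a, ∑ b, omUp l i a * omUp l j b * T a b k m) k m (cliff l i (cliff l j φ))

/-- The spinor-valued 2-form `Σ_{i,j,k,d,m} T^{ijk}_d ε^m ∧ ε^d ⊗ e_{mkij}·φ`. -/
def mixS (l : ℕ) (T : Fin (2*l) → Fin (2*l) → Fin (2*l) → Fin (2*l) → ℝ)
    (φ : Pol l) : Form l 2 :=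
  ∑ i, ∑ j, ∑ k, ∑ d, ∑ m,
    w2 l (∑ a, ∑ b, ∑ c, omUp l i a * omUp l j b * omUp l k c * T a b c d) m d
      (cliff l m (cliff l k (cliff l i (cliff l j φ))))

/-! The Clifford multiplications satisfy the canonical commutation relations
`e_j·e_k − e_k·e_j = −𝕚 ω_{jk}`. Consequently the symplectic Casimir `Σ ω^{ij} e_j·e_i` acts as
the scalar `𝕚 l`, and contracting the commutator `[e_j, v·]` with `ω^{ij}` yields `𝕚 v^i`.
Expanding `(XY + YX)φ`, the terms of `YX` in which `X` multiplies by the basis vector that `Y`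
inserted form this Casimir and give `−𝕚 l φ`; the remaining terms of `XY` and `YX` pair up into
such contracted commutators, leaving
`𝕚 Σ_a (−1)^a φ(v_a, v_1, …, v̂_a, …)`; for alternating `φ` every summand equals `φ(v)`. -/

theorem MvPolynomial.pderiv_pderiv_comm {R σ : Type*} [CommRing R] (i j : σ)
    (f : MvPolynomial σ R) : pderiv i (pderiv j f) = pderiv j (pderiv i f) := by
  classical
  have hbracket : ⁅pderiv i, pderiv j⁆ = (0 : Derivation R (MvPolynomial σ R) _) :=
    derivation_ext fun k => by
      rw [Derivation.commutator_apply]; simp [pderiv_X, Pi.single_apply, apply_ite]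
  rw [← sub_eq_zero, ← Derivation.commutator_apply, hbracket, Derivation.zero_apply]

theorem MvPolynomial.pderiv_X_mul {R σ : Type*} [CommSemiring R] [DecidableEq σ] (i j : σ)
    (f : MvPolynomial σ R) :
    pderiv i (X j * f) = X j * pderiv i f + if i = j then f else 0 := by
  by_cases h : i = j
  · subst h; simp [add_comm]
  · simp [pderiv_X_of_ne (Ne.symm h), h]

theorem Fin.removeNth_succ_cons {α : Type*} {n : ℕ} (b : Fin (n + 1)) (u : α)
    (v : Fin (n + 1) → α) :
    b.succ.removeNth (Fin.cons u v : Fin (n + 2) → α) = Fin.cons u (b.removeNth v) := by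
  funext c
  cases c using Fin.cases <;> simp [Fin.removeNth_apply, Fin.succ_succAbove_succ]

namespace AlternatingMap

variable {R S M N : Type*} [CommRing R] [Ring S] [AddCommGroup M] [AddCommGroup N]
  [Module R M] [Module R N] [Module S N] {n : ℕ}

theorem sum_neg_one_pow_smul_map_cons_removeNth (f : M [⋀^Fin (n + 1)]→ₗ[R] N)
    (v : Fin (n + 1) → M) :
    ∑ i : Fin (n + 1), (-1 : S) ^ (i : ℕ) • f (Fin.cons (v i) (i.removeNth v))
      = ((n + 1 : ℕ) : S) • f v := by
  have h := congr($(alternatizeUncurryFin_curryLeft f) v)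
  simp only [alternatizeUncurryFin_apply, curryLeft_apply_apply, smul_apply] at h
  rw [Nat.cast_smul_eq_nsmul, ← h]
  refine Finset.sum_congr rfl fun i _ => ?_
  rw [← Int.cast_smul_eq_zsmul S]
  push_cast
  rfl

theorem sum_smul_map_cons_single {ι : Type*} [Fintype ι] [DecidableEq ι]
    (f : (ι → R) [⋀^Fin (n + 1)]→ₗ[R] N) (x : ι → R) (u : Fin n → (ι → R)) :
    ∑ k, x k • f (Fin.cons (Pi.single k 1) u) = f (Fin.cons x u) := by
  have hcons (y : ι → R) :
      Function.update (Fin.cons 0 u : Fin (n + 1) → ι → R) 0 y = Fin.cons y u :=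
    Fin.update_cons_zero (α := fun _ => ι → R) 0 u y
  conv_rhs => rw [pi_eq_sum_univ' x, ← hcons, f.map_update_sum]
  refine Finset.sum_congr rfl fun k _ => ?_
  rw [← hcons, f.map_update_smul, hcons]

end AlternatingMap

section SymplecticForm

variable {l : ℕ}

theorem om_antisymm (i j : Fin (2*l)) : om l i j = -om l j i := by
  unfold om; split_ifs <;> first | omega | norm_num

theorem sum_omUp_mul_om (i k : Fin (2*l)) :
    ∑ j, omUp l i j * om l j k = -if i = k then 1 else 0 := by
  have hi := i.isLt; have hk := k.isLt
  -- the only `j` with `ω^{ij} ≠ 0` is the partner index `i ± l`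
  let p : Fin (2*l) := ⟨if (i : ℕ) < l then i + l else i - l, by split_ifs <;> omega⟩
  rw [Fintype.sum_eq_single p fun j hj => ?_]
  · simp only [omUp, om, p, Fin.ext_iff]; split_ifs <;> first | omega | norm_num
  · have hj' : (j : ℕ) ≠ p := fun h => hj (Fin.ext h)
    simp only [omUp, p] at hj' ⊢; split_ifs at hj' ⊢ <;> first | omega | simp

theorem omUp_antisymm (i j : Fin (2*l)) : omUp l i j = -omUp l j i := om_antisymm i j

end SymplecticForm

section Clifford

variable {l : ℕ}

variable (l) in
def cliffLinear (i : Fin (2*l)) : Pol l →ₗ[ℂ] Pol l where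
  toFun := cliff l i
  map_add' f g := by unfold cliff; split <;> simp [mul_add]
  map_smul' c f := by unfold cliff; split <;> simp [smul_comm c]

theorem cliff_add (i : Fin (2*l)) (f g : Pol l) :
    cliff l i (f + g) = cliff l i f + cliff l i g := map_add (cliffLinear l i) f g

theorem cliff_smul (i : Fin (2*l)) (c : ℂ) (f : Pol l) :
    cliff l i (c • f) = c • cliff l i f := map_smul (cliffLinear l i) c f

theorem cliff_neg (i : Fin (2*l)) (f : Pol l) : cliff l i (-f) = -cliff l i f :=
  map_neg (cliffLinear l i) f

theorem cliff_sum {α : Type*} (i : Fin (2*l)) (s : Finset α) (f : α → Pol l) :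
    cliff l i (∑ a ∈ s, f a) = ∑ a ∈ s, cliff l i (f a) := map_sum (cliffLinear l i) f s

variable (l) in
def cliffVLinear (w : Fin (2*l) → ℝ) : Pol l →ₗ[ℂ] Pol l where
  toFun := cliffV l w
  map_add' f g := by simp [cliffV, cliff_add, Finset.sum_add_distrib]
  map_smul' c f := by simp [cliffV, cliff_smul, Finset.smul_sum, smul_comm c]

theorem cliffV_smul (w : Fin (2*l) → ℝ) (c : ℂ) (f : Pol l) :
    cliffV l w (c • f) = c • cliffV l w f := map_smul (cliffVLinear l w) c f

theorem cliffV_sum {α : Type*} (w : Fin (2*l) → ℝ) (s : Finset α) (f : α → Pol l) :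
    cliffV l w (∑ a ∈ s, f a) = ∑ a ∈ s, cliffV l w (f a) := map_sum (cliffVLinear l w) f s

theorem cliffV_basisVec (i : Fin (2*l)) (f : Pol l) :
    cliffV l (basisVec l i) f = cliff l i f := by
  simp [cliffV, basisVec, Pi.single_apply]

theorem cliff_comm (j k : Fin (2*l)) (f : Pol l) :
    cliff l j (cliff l k f) - cliff l k (cliff l j f) = (-(Complex.I * (om l j k : ℂ))) • f := by
  have hj := j.isLt; have hk := k.isLt
  unfold cliff om
  by_cases hjl : (j : ℕ) < l <;> by_cases hkl : (k : ℕ) < l <;>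
    simp only [hjl, hkl, dite_true, dite_false, Derivation.map_smul, pderiv_X_mul, Fin.mk.injEq]
  · rw [if_neg (by omega), if_neg (by omega), mul_smul_comm, mul_smul_comm, mul_left_comm]
    simp
  · rw [if_neg (show ¬ (j : ℕ) = k + l by omega)]
    split_ifs <;> first | omega | simp
  · rw [if_neg (show ¬ (k : ℕ) = j + l by omega)]
    split_ifs <;> first | omega | simp
  · rw [if_neg (by omega), if_neg (by omega), pderiv_pderiv_comm, sub_self]
    simp


theorem cliff_cliffV_sub (j : Fin (2*l)) (w : Fin (2*l) → ℝ) (f : Pol l) :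
    cliff l j (cliffV l w f) - cliffV l w (cliff l j f)
      = (-(Complex.I * ((∑ k, om l j k * w k : ℝ) : ℂ))) • f := by
  simp only [cliffV, cliff_sum, cliff_smul, ← Finset.sum_sub_distrib, ← smul_sub, cliff_comm,
    smul_smul, ← Finset.sum_smul]
  congr 1
  push_cast
  rw [Finset.mul_sum, ← Finset.sum_neg_distrib]
  exact Finset.sum_congr rfl fun k _ => by ring

theorem sum_omUp_mul_sum_om (i : Fin (2*l)) (w : Fin (2*l) → ℝ) :
    ∑ j, omUp l i j * ∑ k, om l j k * w k = -w i := by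
  simp_rw [Finset.mul_sum, ← mul_assoc]
  rw [Finset.sum_comm]
  simp_rw [← Finset.sum_mul, sum_omUp_mul_om]
  simp

theorem sum_omUp_smul_cliff_cliffV_sub (w : Fin (2*l) → ℝ) (g : Fin (2*l) → Pol l) :
    ∑ i, ∑ j, (omUp l i j : ℂ) • cliff l j (cliffV l w (g i))
      - ∑ i, ∑ j, (omUp l i j : ℂ) • cliffV l w (cliff l j (g i))
      = Complex.I • ∑ i, (w i : ℂ) • g i := by
  simp only [← Finset.sum_sub_distrib, ← smul_sub, cliff_cliffV_sub, smul_smul, ← Finset.sum_smul,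
    Finset.smul_sum]
  refine Finset.sum_congr rfl fun i _ => ?_
  congr 1
  have hterm : ∀ j, (omUp l i j : ℂ) * -(Complex.I * ((∑ k, om l j k * w k : ℝ) : ℂ))
      = -Complex.I * ((omUp l i j * ∑ k, om l j k * w k : ℝ) : ℂ) := fun j => by
    push_cast; ring
  rw [Finset.sum_congr rfl fun j _ => hterm j, ← Finset.mul_sum, ← Complex.ofReal_sum,
    sum_omUp_mul_sum_om]
  push_cast
  ring

theorem sum_omUp_smul_cliff_cliff (f : Pol l) :
    ∑ i, ∑ j, (omUp l i j : ℂ) • cliff l j (cliff l i f) = (Complex.I * l) • f := by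
  set S := ∑ i, ∑ j, (omUp l i j : ℂ) • cliff l j (cliff l i f)
  have hswap : S = -∑ i, ∑ j, (omUp l i j : ℂ) • cliff l i (cliff l j f) := by
    rw [Finset.sum_comm]
    simp only [← Finset.sum_neg_distrib, ← neg_smul]
    refine Finset.sum_congr rfl fun i _ => Finset.sum_congr rfl fun j _ => ?_
    rw [omUp_antisymm, Complex.ofReal_neg]
  have hcomm : S - (-S) = (2 * (Complex.I * l)) • f := by
    nth_rewrite 2 [hswap]
    simp only [neg_neg, S, ← Finset.sum_sub_distrib, ← smul_sub, cliff_comm, smul_smul,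
      ← Finset.sum_smul]
    have hrow : ∀ i, ∑ j, (omUp l i j : ℂ) * -(Complex.I * om l j i) = Complex.I := fun i => by
      have hterm : ∀ j, (omUp l i j : ℂ) * -(Complex.I * om l j i)
          = -Complex.I * ((omUp l i j * om l j i : ℝ) : ℂ) := fun j => by
        push_cast; ring
      rw [Finset.sum_congr rfl fun j _ => hterm j, ← Finset.mul_sum, ← Complex.ofReal_sum,
        sum_omUp_mul_om]
      simp
    rw [Finset.sum_congr rfl fun i _ => hrow i, Finset.sum_const, Finset.card_univ,
      Fintype.card_fin, nsmul_eq_mul]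
    congr 1
    push_cast
    ring
  rw [sub_neg_eq_add, ← two_smul ℂ, mul_smul] at hcomm
  exact smul_right_injective _ two_ne_zero hcomm

end Clifford

section Forms

variable {l : ℕ}

theorem Xop_apply {r : ℕ} (φ : Form l r) (v : Fin (r + 1) → (Fin (2*l) → ℝ)) :
    Xop l r φ v = -∑ a : Fin (r + 1), (-1 : ℂ) ^ (a : ℕ) • cliffV l (v a) (φ (a.removeNth v)) :=
  rfl

theorem Xop_succ_cons {r : ℕ} (φ : Form l (r + 1)) (u : Fin (2*l) → ℝ)
    (v : Fin (r + 1) → (Fin (2*l) → ℝ)) :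
    Xop l (r + 1) φ (Fin.cons u v) = -cliffV l u (φ v)
      + ∑ b : Fin (r + 1), (-1 : ℂ) ^ (b : ℕ) •
          cliffV l (v b) (φ (Fin.cons u (b.removeNth v))) := by
  rw [Xop_apply, Fin.sum_univ_succ, neg_add, ← Finset.sum_neg_distrib]
  simp [Fin.removeNth_succ_cons, pow_succ]

theorem Hop_zero_apply (φ : Form l 0) (v : Fin 0 → (Fin (2*l) → ℝ)) :
    Hop l φ v = -(Complex.I * l) • φ v := by
  have hv (w : Fin 0 → (Fin (2*l) → ℝ)) : φ w = φ v := congrArg φ (Subsingleton.elim w v)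
  simp only [Hop, Yop, Xop_apply, Fin.sum_univ_succ, Fin.sum_univ_zero, add_zero, Fin.val_zero,
    pow_zero, one_smul, Fin.cons_zero, cliffV_basisVec, hv, cliff_neg, smul_neg,
    Finset.sum_neg_distrib, sum_omUp_smul_cliff_cliff, neg_smul]

theorem Hop_succ_apply {r : ℕ} (φ : Form l (r + 1)) (v : Fin (r + 1) → (Fin (2*l) → ℝ)) :
    Hop l φ v = -(Complex.I * l) • φ v + Complex.I • ∑ b : Fin (r + 1), (-1 : ℂ) ^ (b : ℕ) •
      ∑ k, (v b k : ℂ) • φ (Fin.cons (basisVec l k) (b.removeNth v)) := by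
  set g : Fin (r + 1) → Fin (2*l) → Pol l :=
    fun b k => φ (Fin.cons (basisVec l k) (b.removeNth v))
  have hXY : Xop l r (Yop l r φ) v = -∑ b : Fin (r + 1), (-1 : ℂ) ^ (b : ℕ) •
      ∑ i, ∑ j, (omUp l i j : ℂ) • cliffV l (v b) (cliff l j (g b i)) := by
    simp only [Xop_apply, Yop, cliffV_sum, cliffV_smul, g]
  have hYX : Yop l (r + 1) (Xop l (r + 1) φ) v = -(Complex.I * l) • φ v
      + ∑ b : Fin (r + 1), (-1 : ℂ) ^ (b : ℕ) •
        ∑ i, ∑ j, (omUp l i j : ℂ) • cliff l j (cliffV l (v b) (g b i)) := by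
    simp only [Yop, Xop_succ_cons, cliffV_basisVec, cliff_add, cliff_neg, cliff_sum, cliff_smul,
      smul_add, smul_neg, Finset.sum_add_distrib, Finset.sum_neg_distrib,
      sum_omUp_smul_cliff_cliff, neg_smul, Finset.smul_sum, g]
    congr 1
    rw [eq_comm, Finset.sum_comm]
    refine Finset.sum_congr rfl fun i _ => ?_
    rw [Finset.sum_comm]
    exact Finset.sum_congr rfl fun j _ => Finset.sum_congr rfl fun b _ => smul_comm _ _ _
  have hbracket : ∀ b : Fin (r + 1),
      ∑ i, ∑ j, (omUp l i j : ℂ) • cliff l j (cliffV l (v b) (g b i))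
        - ∑ i, ∑ j, (omUp l i j : ℂ) • cliffV l (v b) (cliff l j (g b i))
      = Complex.I • ∑ k, (v b k : ℂ) • g b k :=
    fun b => sum_omUp_smul_cliff_cliffV_sub (v b) (g b)
  show Xop l r (Yop l r φ) v + Yop l (r + 1) (Xop l (r + 1) φ) v = _
  rw [hXY, hYX, add_left_comm, ← sub_eq_neg_add, ← Finset.sum_sub_distrib]
  simp only [← smul_sub, hbracket, smul_comm _ Complex.I, ← Finset.smul_sum, g]

end Forms

theorem stmt_1_general (l r : ℕ)
    (φ : AlternatingMap ℝ (Fin (2*l) → ℝ) (Pol l) (Fin r)) :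
    Hop l (fun v => φ v) = fun v => (Complex.I * ((r : ℂ) - (l : ℂ))) • φ v := by
  funext v
  cases r with
  | zero =>
    rw [Hop_zero_apply]
    congr 1
    push_cast
    ring
  | succ r =>
    have hcontract (b : Fin (r + 1)) :
        ∑ k, (v b k : ℂ) • φ (Fin.cons (basisVec l k) (b.removeNth v))
          = φ (Fin.cons (v b) (b.removeNth v)) := by
      simp only [Complex.coe_smul]
      exact φ.sum_smul_map_cons_single (v b) _
    rw [Hop_succ_apply]
    simp only [hcontract, φ.sum_neg_one_pow_smul_map_cons_removeNth, smul_smul, ← add_smul]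
    congr 1
    push_cast
    ring

/-- On alternating spinor-valued `r`-forms (`0 ≤ r ≤ 2l`),
`H = XY + YX` acts as `𝕚 (r − l) · Id`. -/
theorem stmt_1 (l r : ℕ) (hl : 2 ≤ l) (hr : r ≤ 2*l)
    (φ : AlternatingMap ℝ (Fin (2*l) → ℝ) (Pol l) (Fin r)) :
    Hop l (fun v => φ v) = fun v => (Complex.I * ((r : ℂ) - (l : ℂ))) • φ v :=
  stmt_1_general l r φ
end
end

section
/- For every φ ∈ P one has Σ_{i,j,k,l} W^{ijkl} e_l·(e_k·(e_i·(e_j·φ))) = 0, where W^{ijkl} := Σ_{a,b,c,d} ω^{ia}ω^{jb}ω^{kc}ω^{ld}W_{abcd}. -/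
noncomputable section

open Finset MvPolynomial

/-!
For fixed `i, j`, the tensor `C_{km} = W^{ijkm}` is antisymmetric, and the Clifford relation
`e_m·e_k·f − e_k·e_m·f = 𝕚 ω_{km} f` lets one antisymmetrize `Σ C_{km} e_m·e_k·f` into
`(𝕚/2) (Σ C_{km} ω_{km}) f`. The trace-freeness of `W` in its last two indices kills this.
-/

namespace MvPolynomial

theorem pderiv_pderiv_comm_s13 {σ R : Type*} [CommRing R] (i j : σ) (p : MvPolynomial σ R) :
    pderiv i (pderiv j p) = pderiv j (pderiv i p) := by
  classical
  have hcomm : ⁅pderiv i, pderiv j⁆ = (0 : Derivation R (MvPolynomial σ R) (MvPolynomial σ R)) :=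
    derivation_ext fun k => by
      rw [Derivation.commutator_apply, pderiv_X, pderiv_X, Pi.single_apply, Pi.single_apply]
      split_ifs <;> simp
  rw [← sub_eq_zero, ← Derivation.commutator_apply, hcomm, Derivation.zero_apply]

end MvPolynomial

section Clifford

variable {l : ℕ}

theorem om_swap (i j : Fin (2*l)) : om l j i = -om l i j := by
  have := i.isLt
  unfold om; split_ifs <;> first | omega | norm_num

theorem cliff_of_lt {i : Fin (2*l)} (h : (i : ℕ) < l) (f : Pol l) :
    cliff l i f = Complex.I • (X ⟨i, h⟩ * f) :=
  dif_pos h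

theorem cliff_of_le {i : Fin (2*l)} (h : l ≤ (i : ℕ)) (f : Pol l) :
    cliff l i f = pderiv ⟨i - l, by omega⟩ f :=
  dif_neg (by omega)

theorem cliff_cliff_sub_of_lt_of_le {k m : Fin (2*l)} (hk : (k : ℕ) < l) (hm : l ≤ (m : ℕ))
    (f : Pol l) :
    cliff l m (cliff l k f) - cliff l k (cliff l m f) = (Complex.I * (om l k m : ℂ)) • f := by
  rw [cliff_of_lt hk, cliff_of_le hm, cliff_of_le hm, cliff_of_lt hk, Derivation.map_smul,
    Derivation.leibniz, pderiv_X, ← smul_sub, mul_smul]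
  congr 1
  by_cases h : (m : ℕ) = k + l
  · simp [om, h]
  · have hkm : (⟨m - l, by omega⟩ : Fin l) ≠ ⟨k, hk⟩ := fun e => h (by simp [Fin.ext_iff] at e; omega)
    simp [om, h, hkm, show ¬((k : ℕ) = m + l) by omega]

theorem cliff_cliff_sub (k m : Fin (2*l)) (f : Pol l) :
    cliff l m (cliff l k f) - cliff l k (cliff l m f) = (Complex.I * (om l k m : ℂ)) • f := by
  rcases lt_or_ge (k : ℕ) l with hk | hk <;> rcases lt_or_ge (m : ℕ) l with hm | hm
  · have : om l k m = 0 := by unfold om; split_ifs <;> first | omega | rfl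
    simp only [this, cliff_of_lt hk, cliff_of_lt hm, Complex.ofReal_zero,
      mul_zero, zero_smul, sub_eq_zero]
    rw [mul_smul_comm, mul_smul_comm, mul_left_comm]
  · exact cliff_cliff_sub_of_lt_of_le hk hm f
  · rw [← neg_sub, cliff_cliff_sub_of_lt_of_le hm hk, om_swap]
    simp [neg_smul]
  · have : om l k m = 0 := by unfold om; split_ifs <;> first | omega | rfl
    simp [this, cliff_of_le hk, cliff_of_le hm, pderiv_pderiv_comm_s13]

theorem sum_smul_cliff_cliff_of_antisymm (C : Fin (2*l) → Fin (2*l) → ℝ)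
    (hC : ∀ k m, C m k = -C k m) (f : Pol l) :
    ∑ k, ∑ m, (C k m : ℂ) • cliff l m (cliff l k f)
      = (Complex.I / 2 * ((∑ k, ∑ m, C k m * om l k m : ℝ) : ℂ)) • f := by
  set S := ∑ k, ∑ m, (C k m : ℂ) • cliff l m (cliff l k f)
  have hswap : S = -S + (Complex.I * ((∑ k, ∑ m, C k m * om l k m : ℝ) : ℂ)) • f := by
    calc S = ∑ k, ∑ m, (C m k : ℂ) • cliff l k (cliff l m f) := sum_comm
      _ = ∑ k, ∑ m, ((-(C k m : ℂ)) • cliff l m (cliff l k f)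
            + (Complex.I * (C k m * om l k m : ℝ)) • f) := by
          refine sum_congr rfl fun k _ => sum_congr rfl fun m _ => ?_
          rw [hC]
          push_cast
          linear_combination (norm := module) (C k m : ℂ) • cliff_cliff_sub k m f
      _ = _ := by
          simp only [sum_add_distrib, neg_smul, sum_neg_distrib, ← sum_smul, ← mul_sum]
          push_cast
          rfl
  linear_combination (norm := module) (1 / 2 : ℂ) • hswap

end Clifford

theorem upT_swap_of_antisymm {l : ℕ} {W : Fin (2*l) → Fin (2*l) → Fin (2*l) → Fin (2*l) → ℝ}
    (hW : ∀ i j k m, W i j k m = -W i j m k) (i j k m : Fin (2*l)) :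
    upT l W i j m k = -upT l W i j k m := by
  simp only [upT, ← sum_neg_distrib]
  refine sum_congr rfl fun a _ => sum_congr rfl fun b _ => ?_
  rw [sum_comm]
  refine sum_congr rfl fun c _ => sum_congr rfl fun d _ => ?_
  rw [hW a b d c]
  ring

theorem stmt_13_general (l : ℕ) (W : Fin (2*l) → Fin (2*l) → Fin (2*l) → Fin (2*l) → ℝ)
    (hW2 : ∀ i j k m, W i j k m = - W i j m k)
    (hW10 : ∀ i j, ∑ k, ∑ m, upT l W i j k m * om l k m = 0)
    (φ : Pol l) :
    ∑ i, ∑ j, ∑ k, ∑ m, ((upT l W i j k m : ℝ) : ℂ) •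
      cliff l m (cliff l k (cliff l i (cliff l j φ))) = 0 := by
  refine sum_eq_zero fun i _ => sum_eq_zero fun j _ => ?_
  rw [sum_smul_cliff_cliff_of_antisymm (upT l W i j) (upT_swap_of_antisymm hW2 i j), hW10 i j]
  simp

/-- `Σ W^{ijkl} e_l·(e_k·(e_i·(e_j·φ))) = 0`. -/
theorem stmt_13 (l : ℕ) (hl : 2 ≤ l) (W : Fin (2*l) → Fin (2*l) → Fin (2*l) → Fin (2*l) → ℝ)
    (hW1 : ∀ i j k m, W i j k m = W j i k m)
    (hW2 : ∀ i j k m, W i j k m = - W i j m k)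
    (hW3 : ∀ i j k m, W i j k m + W i k m j + W i m j k = 0)
    (hW4 : ∀ i j k m, W i j k m + W j k m i + W k m i j + W m i j k = 0)
    (hW5 : ∀ k m, ∑ i, ∑ j, upT l W i j k m * om l i j = 0)
    (hW6 : ∀ j m, ∑ i, ∑ k, upT l W i j k m * om l i k = 0)
    (hW7 : ∀ j k, ∑ i, ∑ m, upT l W i j k m * om l i m = 0)
    (hW8 : ∀ i m, ∑ j, ∑ k, upT l W i j k m * om l j k = 0)
    (hW9 : ∀ i k, ∑ j, ∑ m, upT l W i j k m * om l j m = 0)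
    (hW10 : ∀ i j, ∑ k, ∑ m, upT l W i j k m * om l k m = 0)
    (φ : Pol l) :
    ∑ i, ∑ j, ∑ k, ∑ m, ((upT l W i j k m : ℝ) : ℂ) •
      cliff l m (cliff l k (cliff l i (cliff l j φ))) = 0 :=
  stmt_13_general l W hW2 hW10 φ

end
end
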